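/- arXiv:0709.2099 — 2 statements merged into one kernel-verified Lean document; each statement's English description precedes it below -/
import Mathlib

section
/- Let P be a simple d-polytope in E^d and let φ be the minimum angle between aff(I) and aff(F), where F ranges over all facets and I over all edges of P such that I and F have exactly one vertex in common. Then α ≤ √d / sin φ and α ≤ √d / (1 − γ). -/
noncomputable section

open Metric Set Finset Matrix
open scoped RealInnerProductSpace BigOperators Classical

namespace AverkovHenk

abbrev E (d : ℕ) := EuclideanSpace ℝ (Fin d)

/-- Support function `h(P,u)` of `P` in direction `u`. -/
def supp {d : ℕ} (P : Set (E d)) (u : E d) : ℝ :=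
  sSup ((fun x => ⟪u, x⟫) '' P)

/-- The normalized affine function `q_F` of the facet with outward unit normal `u`. -/
def qf {d : ℕ} (P : Set (E d)) (u : E d) (x : E d) : ℝ :=
  (supp P u - ⟪u, x⟫) / Metric.diam P

/-- The exposed face of `P` in direction `u`. -/
def faceOf {d : ℕ} (P : Set (E d)) (u : E d) : Set (E d) :=
  {x ∈ P | ⟪u, x⟫ = supp P u}

/-- `u` is an outward unit normal of a facet (a `(d-1)`-dimensional face) of `P`. -/
def IsFacetNormal {d : ℕ} (P : Set (E d)) (u : E d) : Prop :=
  ‖u‖ = 1 ∧ Module.finrank ℝ ↥(vectorSpan ℝ (faceOf P u)) = d - 1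

/-- The vertices of `P`, i.e. its extreme points. -/
def vertices {d : ℕ} (P : Set (E d)) : Set (E d) := Set.extremePoints ℝ P

/-- The `l`-th elementary symmetric function of `y_1, …, y_m`. -/
def esymm {m : ℕ} (y : Fin m → ℝ) (l : ℕ) : ℝ :=
  ∑ J ∈ Finset.powersetCard l (Finset.univ : Finset (Fin m)), ∏ j ∈ J, y j

/-- A presentation of a convex `d`-polytope `P ⊆ E^d` by the `m` outward unit normals
`u 0, …, u (m-1)` of its facets, together with the induced representation
`P = {x | q_j(x) ≥ 0 for all j}`. -/
structure FacetRep (d m : ℕ) where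
  P : Set (E d)
  u : Fin m → E d
  convex : Convex ℝ P
  compact : IsCompact P
  fulldim : (interior P).Nonempty
  inj : Function.Injective u
  facet : ∀ j, IsFacetNormal P (u j)
  complete : ∀ w : E d, IsFacetNormal P w → ∃ j, w = u j
  rep : P = {x | ∀ j, 0 ≤ qf P (u j) x}

namespace FacetRep

variable {d m : ℕ}

/-- The vector `q(x) = (q_1(x), …, q_m(x))`. -/
def q (R : FacetRep d m) (x : E d) : Fin m → ℝ := fun j => qf R.P (R.u j) x

/-- The indices of the facets containing the point `v`. -/
def act (R : FacetRep d m) (v : E d) : Finset (Fin m) :=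
  Finset.univ.filter fun j => R.q v j = 0

/-- The polytope is simple: each vertex lies on exactly `d` facets. -/
def Simple (R : FacetRep d m) : Prop :=
  ∀ v ∈ vertices R.P, (R.act v).card = d

/-- The enlarged polytope `P_ε`. -/
def Peps (R : FacetRep d m) (ε : ℝ) : Set (E d) := {x | ∀ j, -ε ≤ R.q x j}

/-- The box `Π_{v,ε} = {x : |q_v(x)|_∞ ≤ ε}`. -/
def Piv (R : FacetRep d m) (v : E d) (ε : ℝ) : Set (E d) :=
  {x | ∀ j ∈ R.act v, |R.q x j| ≤ ε}

/-- The cone `C_v = {x : -σ_1(q_v(x)) ≥ (2/3)|q_v(x)|}` (Euclidean norm). -/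
def Cv (R : FacetRep d m) (v : E d) : Set (E d) :=
  {x | (2/3) * Real.sqrt (∑ j ∈ R.act v, (R.q x j)^2) ≤ -(∑ j ∈ R.act v, R.q x j)}

/-- The polytope `P^v_{ε,δ}`. -/
def Pv (R : FacetRep d m) (v : E d) (ε δ : ℝ) : Set (E d) :=
  {x | (∀ j ∈ R.act v, -ε ≤ R.q x j) ∧ ∀ j ∉ R.act v, δ ≤ R.q x j}

/-- `γ = max{1 - q_F(v) : F a facet, v a vertex not on F}`. -/
def gam (R : FacetRep d m) : ℝ :=
  sSup {c | ∃ v ∈ vertices R.P, ∃ j, R.q v j ≠ 0 ∧ c = 1 - R.q v j}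

/-- The polynomial `f_k` built from weights `y_v` over the vertex set `V`. -/
def fk (R : FacetRep d m) (V : Finset (E d)) (y : ↥V → ℝ) (k : ℕ) (x : E d) : ℝ :=
  ∑ v : ↥V, y v * ((∑ j ∈ R.act v.1, (1 - R.q x j)^(2*k)) / (R.act v.1).card)^(2*k)

/-- The matrix `A_k` indexed by the vertex set `V`. -/
def Ak (R : FacetRep d m) (V : Finset (E d)) (k : ℕ) : Matrix ↥V ↥V ℝ :=
  Matrix.of fun w v : ↥V => ((∑ j ∈ R.act v.1, (1 - R.q w.1 j)^(2*k)) / (R.act v.1).card)^(2*k)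

/-- `deg(P)`: the maximal number of facets through a vertex. -/
def degP (R : FacetRep d m) (V : Finset (E d)) : ℕ := V.sup fun v => (R.act v).card

end FacetRep

/-- `|U_s^{-1}|_2` where `U_s` is the matrix with rows `u_j^T`, `j ∈ s`: the supremum of `‖x‖`
over the set where the Euclidean norm of `U_s x` is at most `1`. -/
def invNormU {d m : ℕ} (u : Fin m → E d) (s : Finset (Fin m)) : ℝ :=
  sSup {c | ∃ x : E d, Real.sqrt (∑ j ∈ s, (⟪u j, x⟫)^2) ≤ 1 ∧ c = ‖x‖}

/-- `α = max_{v ∈ vert(P)} |U_v^{-1}|_2`. -/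
def alpha {d m : ℕ} (R : FacetRep d m) (V : Finset (E d)) : ℝ :=
  sSup {a | ∃ v ∈ V, a = invNormU R.u (R.act v)}

/-- The normal cone `N(Q,x) = {u : ⟨x,u⟩ = h(Q,u)}`. -/
def normalCone {d : ℕ} (Q : Set (E d)) (x : E d) : Set (E d) :=
  {u | ⟪u, x⟫ = supp Q u}

/-- `S` is an edge (a 1-dimensional face) of `P`. -/
def IsEdgeOf {d : ℕ} (P S : Set (E d)) : Prop :=
  IsExposed ℝ P S ∧ Module.finrank ℝ ↥(vectorSpan ℝ S) = 1


/-!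
At a simple vertex `v` the active normals `u_j` form a basis; let `e_j` be the dual basis.
Moving from `v` along `-e_j` keeps the facets `F_i`, `i ≠ j`, and traces an edge meeting `F_j`
only at `v`; the sine of its angle with `F_j` is `⟪u_j, e_j⟫ / ‖e_j‖ = 1 / ‖e_j‖`, so
`‖e_j‖ ≤ 1 / sin φ`. Expanding `x = ∑ ⟪u_j, x⟫ e_j` and applying Cauchy–Schwarz gives
`|U_v⁻¹|₂ ≤ √d / sin φ`. For the second bound, an edge `[p, p']` meeting `F_j` only at `p'`
satisfies `1 - γ ≤ q_j(p) = ⟪u_j, p' - p⟫ / diam P ≤ ⟪u_j, p' - p⟫ / ‖p' - p‖`; applied to an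
edge attaining `φ` this gives `1 - γ ≤ sin φ`.
-/

open Filter Topology

section Slope

variable {V : Type*} [NormedAddCommGroup V] [InnerProductSpace ℝ V]

lemma abs_inner_smul_div_norm_smul (u w : V) {c : ℝ} (hc : c ≠ 0) :
    |⟪u, c • w⟫| / ‖c • w‖ = |⟪u, w⟫| / ‖w‖ := by
  rw [real_inner_smul_right, norm_smul, Real.norm_eq_abs, abs_mul,
    mul_div_mul_left _ _ (abs_ne_zero.2 hc)]

lemma abs_inner_div_norm_mem_Icc {u : V} (hu : ‖u‖ = 1) (w : V) :
    |⟪u, w⟫| / ‖w‖ ∈ Icc (-1 : ℝ) 1 := by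
  refine ⟨le_trans (by norm_num : (-1 : ℝ) ≤ 0) (by positivity),
    div_le_one_of_le₀ ?_ (norm_nonneg w)⟩
  simpa [hu] using abs_real_inner_le_norm u w

end Slope

section Segment

variable {k V : Type*} [Field k] [AddCommGroup V] [Module k V]

lemma exists_sub_eq_smul_of_finrank_vectorSpan_eq_one {S : Set V}
    (hS : Module.finrank k (vectorSpan k S) = 1) {a b x y : V} (ha : a ∈ S) (hb : b ∈ S)
    (hab : a ≠ b) (hx : x ∈ S) (hy : y ∈ S) : ∃ c : k, x - y = c • (a - b) := by
  have : FiniteDimensional k (vectorSpan k S) := Module.finite_of_finrank_eq_succ hS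
  have hspan : k ∙ (a - b) = vectorSpan k S := by
    refine Submodule.eq_of_le_of_finrank_le ?_ ?_
    · exact (Submodule.span_singleton_le_iff_mem _ _).2 (vsub_mem_vectorSpan k ha hb)
    · rw [hS, finrank_span_singleton (sub_ne_zero.2 hab)]
  have hxy : x - y ∈ k ∙ (a - b) := hspan ▸ vsub_mem_vectorSpan k hx hy
  obtain ⟨c, hc⟩ := Submodule.mem_span_singleton.1 hxy
  exact ⟨c, hc.symm⟩

lemma injOn_of_finrank_vectorSpan_eq_one {S : Set V}
    (hS : Module.finrank k (vectorSpan k S) = 1) (ℓ : V →ₗ[k] k) {a b : V} (ha : a ∈ S)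
    (hb : b ∈ S) (hℓ : ℓ a ≠ ℓ b) : InjOn ℓ S := by
  intro x hx y hy hxy
  obtain ⟨c, hc⟩ := exists_sub_eq_smul_of_finrank_vectorSpan_eq_one hS ha hb
    (fun h => hℓ (congrArg ℓ h)) hx hy
  have : c * (ℓ a - ℓ b) = 0 := by
    rw [← map_sub, ← smul_eq_mul, ← map_smul, ← hc, map_sub, hxy, sub_self]
  rcases mul_eq_zero.1 this with h | h
  · rwa [h, zero_smul, sub_eq_zero] at hc
  · exact absurd (sub_eq_zero.1 h) hℓ

end Segment

lemma exists_mem_extremePoints_isMaxOn_of_isExposed {F : Type*} [NormedAddCommGroup F]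
    [NormedSpace ℝ F] {A B : Set F} (hA : IsCompact A) (hAB : IsExposed ℝ A B)
    (hB : B.Nonempty) (ℓ : StrongDual ℝ F) (hinj : InjOn ℓ B) :
    ∃ x ∈ A.extremePoints ℝ ∩ B, IsMaxOn ℓ B x := by
  obtain ⟨x, hx, hmax⟩ := (hAB.isCompact hA).exists_isMaxOn hB ℓ.continuous.continuousOn
  have hexposed : x ∈ B.exposedPoints ℝ :=
    ⟨hx, ℓ, fun y hy => ⟨hmax hy, fun h => hinj hy hx (le_antisymm (hmax hy) h)⟩⟩
  exact ⟨x, ⟨hAB.isExtreme.extremePoints_subset_extremePoints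
    (exposedPoints_subset_extremePoints hexposed), hx⟩, hmax⟩

lemma exists_extremePoints_isMinOn_isMaxOn {F : Type*} [NormedAddCommGroup F]
    [NormedSpace ℝ F] {A B : Set F} (hA : IsCompact A) (hAB : IsExposed ℝ A B)
    (hB : B.Nonempty) (ℓ : StrongDual ℝ F) (hinj : InjOn ℓ B) :
    ∃ p ∈ A.extremePoints ℝ ∩ B, ∃ q ∈ A.extremePoints ℝ ∩ B, IsMinOn ℓ B p ∧ IsMaxOn ℓ B q := by
  obtain ⟨p, hp, hpmax⟩ := exists_mem_extremePoints_isMaxOn_of_isExposed hA hAB hB (-ℓ)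
    fun x hx y hy h => hinj hx hy (neg_inj.1 h)
  obtain ⟨q, hq, hqmax⟩ := exists_mem_extremePoints_isMaxOn_of_isExposed hA hAB hB ℓ hinj
  exact ⟨p, hp, q, hq, fun x hx => by simpa using hpmax hx, hqmax⟩

lemma invNormU_le_of_basis {d m : ℕ} {u : Fin m → E d} {s : Finset (Fin m)}
    (b : Module.Basis s ℝ (E d)) (hb : ∀ x i, b.repr x i = ⟪u i, x⟫) {C : ℝ} (hC0 : 0 ≤ C)
    (hC : ∀ i, ‖b i‖ ≤ C) : invNormU u s ≤ √(s.card : ℝ) * C := by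
  refine Real.sSup_le ?_ (by positivity)
  rintro _ ⟨x, hx, rfl⟩
  have hcs : ∑ i ∈ s, |⟪u i, x⟫| ≤ √(s.card : ℝ) := by
    have := Real.sum_mul_le_sqrt_mul_sqrt s (fun _ => 1) (fun i => |⟪u i, x⟫|)
    simp only [one_mul, one_pow, Finset.sum_const, nsmul_eq_mul, mul_one, sq_abs] at this
    exact this.trans (mul_le_of_le_one_right (Real.sqrt_nonneg _) hx)
  calc ‖x‖ = ‖∑ i : s, ⟪u i, x⟫ • b i‖ := by simp only [← hb, b.sum_repr]
    _ ≤ ∑ i : s, |⟪u i, x⟫| * C := (norm_sum_le _ _).trans <| Finset.sum_le_sum fun i _ => by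
        rw [norm_smul, Real.norm_eq_abs]
        exact mul_le_mul_of_nonneg_left (hC i) (abs_nonneg _)
    _ = (∑ i ∈ s, |⟪u i, x⟫|) * C := by
        rw [← Finset.sum_mul, Finset.sum_coe_sort s fun i => |⟪u i, x⟫|]
    _ ≤ √(s.card : ℝ) * C := mul_le_mul_of_nonneg_right hcs hC0

namespace FacetRep

variable {d m : ℕ} (R : FacetRep d m)

lemma mem_P_iff {x : E d} : x ∈ R.P ↔ ∀ j, 0 ≤ R.q x j :=
  Set.ext_iff.mp R.rep x

lemma inner_le_supp {x : E d} (hx : x ∈ R.P) (u : E d) : ⟪u, x⟫ ≤ supp R.P u :=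
  le_csSup (R.compact.image (continuous_const.inner continuous_id)).bddAbove ⟨x, hx, rfl⟩

lemma q_add_smul (x y : E d) (t : ℝ) (j : Fin m) :
    R.q (x + t • y) j = R.q x j - t * ⟪R.u j, y⟫ / diam R.P := by
  simp only [q, qf, inner_add_right, real_inner_smul_right]
  ring

lemma q_eq_zero_iff (hP : 0 < diam R.P) {x : E d} {j : Fin m} :
    R.q x j = 0 ↔ ⟪R.u j, x⟫ = supp R.P (R.u j) := by
  rw [q, qf, div_eq_zero_iff, or_iff_left hP.ne', sub_eq_zero, eq_comm]

lemma mem_act_iff {v : E d} {j : Fin m} : j ∈ R.act v ↔ R.q v j = 0 := by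
  simp [act]

lemma q_pos_of_notMem_act {x : E d} (hx : x ∈ R.P) {j : Fin m} (hj : j ∉ R.act x) :
    0 < R.q x j :=
  ((R.mem_P_iff.1 hx) j).lt_of_ne (Ne.symm (R.mem_act_iff.not.1 hj))

lemma diam_pos (hd : 0 < d) : 0 < diam R.P := by
  have : NeZero d := ⟨hd.ne'⟩
  obtain ⟨x, hx⟩ := R.fulldim
  rcases eq_singleton_or_nontrivial (interior_subset hx) with h | h
  · rw [h, interior_singleton] at hx
    exact hx.elim
  · exact Metric.diam_pos h R.compact.isBounded

lemma eventually_add_smul_mem {v z : E d} (hv : v ∈ R.P)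
    (hz : ∀ j ∈ R.act v, ⟪R.u j, z⟫ ≤ 0) : ∀ᶠ t in 𝓝[>] (0 : ℝ), v + t • z ∈ R.P := by
  simp_rw [R.mem_P_iff]
  refine Filter.eventually_all.2 fun j => ?_
  by_cases hj : j ∈ R.act v
  · filter_upwards [self_mem_nhdsWithin] with t (ht : 0 < t)
    rw [q_add_smul, R.mem_act_iff.1 hj, zero_sub, neg_nonneg]
    exact div_nonpos_of_nonpos_of_nonneg (mul_nonpos_of_nonneg_of_nonpos ht.le (hz j hj))
      diam_nonneg
  · have hcont : Continuous fun t : ℝ => R.q (v + t • z) j := by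
      simp only [q_add_smul]
      fun_prop
    have hpos : ∀ᶠ t in 𝓝 (0 : ℝ), 0 < R.q (v + t • z) j :=
      continuousAt_const.eventually_lt hcont.continuousAt
        (by simpa using R.q_pos_of_notMem_act hv hj)
    exact (hpos.filter_mono nhdsWithin_le_nhds).mono fun t ht => ht.le

/-- Otherwise `v` would be the midpoint of two points `v ± t • y` of `P`. -/
lemma eq_zero_of_inner_act_eq_zero {v y : E d} (hv : v ∈ vertices R.P)
    (hy : ∀ j ∈ R.act v, ⟪R.u j, y⟫ = 0) : y = 0 := by
  have hvP : v ∈ R.P := hv.1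
  have hplus := R.eventually_add_smul_mem hvP (z := y) fun j hj => (hy j hj).le
  have hminus := R.eventually_add_smul_mem hvP (z := -y) fun j hj => by
    rw [inner_neg_right, hy j hj, neg_zero]
  obtain ⟨t, ⟨hpt, hmt⟩, ht⟩ := ((hplus.and hminus).and self_mem_nhdsWithin).exists
  have hmid : v ∈ openSegment ℝ (v + t • y) (v + t • -y) :=
    ⟨1 / 2, 1 / 2, by norm_num, by norm_num, by norm_num, by module⟩
  have hty : t • y = 0 := by simpa using hv.2 hpt hmt hmid
  exact (smul_eq_zero.1 hty).resolve_left (ne_of_gt ht)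

lemma exists_basis_repr_eq_inner {v : E d} (hv : v ∈ vertices R.P) (hcard : (R.act v).card = d) :
    ∃ b : Module.Basis (R.act v) ℝ (E d), ∀ x i, b.repr x i = ⟪R.u i, x⟫ := by
  let f : E d →ₗ[ℝ] (R.act v → ℝ) := LinearMap.pi fun i => innerₛₗ ℝ (R.u i)
  have hinj : Function.Injective f := by
    rw [← LinearMap.ker_eq_bot, eq_bot_iff]
    exact fun y hy => R.eq_zero_of_inner_act_eq_zero hv fun i hi => congrFun hy ⟨i, hi⟩
  have hdim : Module.finrank ℝ (E d) = Module.finrank ℝ (R.act v → ℝ) := by simp [hcard]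
  exact ⟨.ofEquivFun (f.linearEquivOfInjective hinj hdim), fun x i => rfl⟩

def face (s : Finset (Fin m)) : Set (E d) := {x ∈ R.P | ∀ i ∈ s, R.q x i = 0}

/-- On `P`, `∑ i ∈ s, q_i` is a constant minus `l`, and it vanishes exactly on the face. -/
lemma isExposed_face (s : Finset (Fin m)) : IsExposed ℝ R.P (R.face s) := by
  rintro ⟨x₀, hx₀P, hx₀⟩
  let l : StrongDual ℝ (E d) := (diam R.P)⁻¹ • ∑ i ∈ s, innerSL ℝ (R.u i)
  have hsum : ∀ x, ∑ i ∈ s, R.q x i = (diam R.P)⁻¹ * ∑ i ∈ s, supp R.P (R.u i) - l x := by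
    intro x
    simp [l, q, qf, div_eq_inv_mul, mul_sub, Finset.mul_sum, Finset.sum_sub_distrib]
  have hnonneg : ∀ x ∈ R.P, 0 ≤ ∑ i ∈ s, R.q x i :=
    fun x hx => Finset.sum_nonneg fun i _ => R.mem_P_iff.1 hx i
  refine ⟨l, Set.ext fun x => ⟨fun ⟨hxP, hx⟩ => ⟨hxP, fun y hy => ?_⟩, fun ⟨hxP, hx⟩ => ⟨hxP, ?_⟩⟩⟩
  · have hx0 : ∑ i ∈ s, R.q x i = 0 := Finset.sum_eq_zero hx
    linarith [hsum x, hsum y, hnonneg y hy]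
  · have hle : ∑ i ∈ s, R.q x i ≤ 0 := by
      rw [hsum, ← Finset.sum_eq_zero hx₀, hsum x₀]
      linarith [hx x₀ hx₀P]
    exact (Finset.sum_eq_zero_iff_of_nonneg fun i _ => R.mem_P_iff.1 hxP i).1
      (le_antisymm hle (hnonneg x hxP))

lemma inner_sub_eq_zero_of_q_eq_zero (hP : 0 < diam R.P) {x y : E d} {i : Fin m}
    (hx : R.q x i = 0) (hy : R.q y i = 0) : ⟪R.u i, x - y⟫ = 0 := by
  rw [inner_sub_right, (R.q_eq_zero_iff hP).1 hx, (R.q_eq_zero_iff hP).1 hy, sub_self]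

lemma vertices_inter_face_erase_inter_faceOf (hP : 0 < diam R.P) {v : E d}
    (hv : v ∈ vertices R.P) {j : Fin m} (hj : j ∈ R.act v) :
    vertices R.P ∩ R.face ((R.act v).erase j) ∩ faceOf R.P (R.u j) = {v} := by
  refine Set.eq_singleton_iff_unique_mem.2 ⟨⟨⟨hv, hv.1, fun i hi => ?_⟩, hv.1, ?_⟩, ?_⟩
  · exact R.mem_act_iff.1 (Finset.mem_of_mem_erase hi)
  · exact (R.q_eq_zero_iff hP).1 (R.mem_act_iff.1 hj)
  · rintro w ⟨⟨-, -, hwS⟩, -, hwF⟩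
    refine sub_eq_zero.1 (R.eq_zero_of_inner_act_eq_zero hv fun i hi => ?_)
    refine R.inner_sub_eq_zero_of_q_eq_zero hP ?_ (R.mem_act_iff.1 hi)
    obtain rfl | hij := eq_or_ne i j
    · exact (R.q_eq_zero_iff hP).2 hwF
    · exact hwS i (Finset.mem_erase.2 ⟨hij, hi⟩)

lemma vectorSpan_face_erase_le (hP : 0 < diam R.P) {v : E d}
    (b : Module.Basis (R.act v) ℝ (E d)) (hb : ∀ x i, b.repr x i = ⟪R.u i, x⟫) (j : R.act v) :
    vectorSpan ℝ (R.face ((R.act v).erase j)) ≤ ℝ ∙ b j := by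
  refine Submodule.span_le.2 ?_
  rintro _ ⟨x, hx, y, hy, rfl⟩
  have hcoord : ∀ i ≠ j, ⟪R.u i, x - y⟫ = 0 := fun i hij => by
    have hi : (i : Fin m) ∈ (R.act v).erase j := Finset.mem_erase.2 ⟨Subtype.coe_ne_coe.2 hij, i.2⟩
    exact R.inner_sub_eq_zero_of_q_eq_zero hP (hx.2 i hi) (hy.2 i hi)
  have hxy := b.sum_repr (x - y)
  simp only [hb] at hxy
  rw [Finset.sum_eq_single j (fun i _ hij => by rw [hcoord i hij, zero_smul])
    (fun h => absurd (Finset.mem_univ j) h)] at hxy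
  exact Submodule.mem_span_singleton.2 ⟨_, hxy⟩

/-- The edge leaves `v` in direction `-b j`, staying in the active facets other than the `j`-th. -/
lemma exists_isEdgeOf_abs_inner_div_norm_eq (hP : 0 < diam R.P) {v : E d}
    (hv : v ∈ vertices R.P) (b : Module.Basis (R.act v) ℝ (E d))
    (hb : ∀ x i, b.repr x i = ⟪R.u i, x⟫) (j : R.act v) :
    ∃ S, IsEdgeOf R.P S ∧ (vertices R.P ∩ S ∩ faceOf R.P (R.u j)).ncard = 1 ∧
      ∃ a ∈ S, ∃ c ∈ S, a ≠ c ∧ |⟪R.u j, a - c⟫| / ‖a - c‖ = ‖b j‖⁻¹ := by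
  have hdual : ∀ i k : R.act v, ⟪R.u i, b k⟫ = if k = i then 1 else 0 := fun i k => by
    rw [← hb, b.repr_self, Finsupp.single_apply]
  have hinward : ∀ i ∈ R.act v, ⟪R.u i, -b j⟫ ≤ 0 := fun i hi => by
    rw [inner_neg_right, hdual ⟨i, hi⟩ j, neg_nonpos]
    split_ifs <;> norm_num
  obtain ⟨t, haP, ht : 0 < t⟩ :=
    ((R.eventually_add_smul_mem hv.1 hinward).and self_mem_nhdsWithin).exists
  set S := R.face ((R.act v).erase j)
  set a := v + t • -b j
  have hvS : v ∈ S := ⟨hv.1, fun i hi => R.mem_act_iff.1 (Finset.mem_of_mem_erase hi)⟩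
  have haS : a ∈ S := by
    refine ⟨haP, fun i hi => ?_⟩
    obtain ⟨hij, hi⟩ := Finset.mem_erase.1 hi
    rw [q_add_smul, R.mem_act_iff.1 hi, inner_neg_right, hdual ⟨i, hi⟩ j,
      if_neg (fun h => hij (congrArg Subtype.val h).symm)]
    simp
  have hav : a - v = (-t) • b j := by simp [a]
  have hspan : vectorSpan ℝ S = ℝ ∙ b j := by
    refine le_antisymm (R.vectorSpan_face_erase_le hP b hb j)
      ((Submodule.span_singleton_le_iff_mem _ _).2 ?_)
    have hmem : a - v ∈ vectorSpan ℝ S := vsub_mem_vectorSpan ℝ haS hvS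
    rw [hav] at hmem
    simpa [ht.ne'] using Submodule.smul_mem _ (-t)⁻¹ hmem
  refine ⟨S, ⟨R.isExposed_face _, by rw [hspan, finrank_span_singleton (b.ne_zero j)]⟩,
    by rw [R.vertices_inter_face_erase_inter_faceOf hP hv j.2, Set.ncard_singleton],
    a, haS, v, hvS, ?_, ?_⟩
  · rw [← sub_ne_zero, hav]
    exact smul_ne_zero (neg_ne_zero.2 ht.ne') (b.ne_zero j)
  · rw [hav, abs_inner_smul_div_norm_smul _ _ (neg_ne_zero.2 ht.ne'), hdual, if_pos rfl, abs_one,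
      one_div]

lemma invNormU_act_le_of_forall_le (hP : 0 < diam R.P) {v : E d} (hv : v ∈ vertices R.P)
    (hcard : (R.act v).card = d) {s : ℝ} (hs : 0 < s)
    (hslope : ∀ j S, IsEdgeOf R.P S → (vertices R.P ∩ S ∩ faceOf R.P (R.u j)).ncard = 1 →
      ∀ a ∈ S, ∀ c ∈ S, a ≠ c → s ≤ |⟪R.u j, a - c⟫| / ‖a - c‖) :
    invNormU R.u (R.act v) ≤ √(d : ℝ) / s := by
  obtain ⟨b, hb⟩ := R.exists_basis_repr_eq_inner hv hcard
  have hbj : ∀ j, ‖b j‖ ≤ s⁻¹ := fun j => by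
    obtain ⟨S, hS, hone, a, ha, c, hc, hac, heq⟩ :=
      R.exists_isEdgeOf_abs_inner_div_norm_eq hP hv b hb j
    exact (le_inv_comm₀ hs (norm_pos_iff.2 (b.ne_zero j))).1
      (heq ▸ hslope j S hS hone a ha c hc hac)
  simpa [hcard, div_eq_mul_inv] using invNormU_le_of_basis b hb (inv_nonneg.2 hs.le) hbj

lemma vertices_finite (hP : 0 < diam R.P) : (vertices R.P).Finite := by
  refine Set.Finite.of_finite_image (f := R.act) (Set.toFinite _) fun x hx y hy hxy => ?_
  refine sub_eq_zero.1 (R.eq_zero_of_inner_act_eq_zero hx fun i hi => ?_)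
  exact R.inner_sub_eq_zero_of_q_eq_zero hP (R.mem_act_iff.1 hi)
    (R.mem_act_iff.1 (hxy ▸ hi))

lemma isGreatest_gam (hP : 0 < diam R.P) {v : E d} (hv : v ∈ vertices R.P) {j : Fin m}
    (hj : R.q v j ≠ 0) :
    IsGreatest {c | ∃ v ∈ vertices R.P, ∃ j, R.q v j ≠ 0 ∧ c = 1 - R.q v j} R.gam := by
  have hfin : {c | ∃ v ∈ vertices R.P, ∃ j, R.q v j ≠ 0 ∧ c = 1 - R.q v j}.Finite := by
    refine (((R.vertices_finite hP).prod Set.finite_univ).image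
      fun p : E d × Fin m => 1 - R.q p.1 p.2).subset ?_
    rintro _ ⟨v, hv, j, -, rfl⟩
    exact ⟨(v, j), ⟨hv, Set.mem_univ _⟩, rfl⟩
  exact ⟨Set.Nonempty.csSup_mem ⟨_, v, hv, j, hj, rfl⟩ hfin, fun c hc => le_csSup hfin.bddAbove hc⟩

lemma one_sub_gam_pos (hP : 0 < diam R.P) {v : E d} (hv : v ∈ vertices R.P) {j : Fin m}
    (hj : R.q v j ≠ 0) : 0 < 1 - R.gam := by
  obtain ⟨w, hw, i, hi, hγ⟩ := (R.isGreatest_gam hP hv hj).1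
  rw [hγ, sub_sub_cancel]
  exact (R.mem_P_iff.1 hw.1 i).lt_of_ne (Ne.symm hi)

lemma one_sub_gam_le_q (hP : 0 < diam R.P) {v : E d} (hv : v ∈ vertices R.P) {j : Fin m}
    (hj : R.q v j ≠ 0) : 1 - R.gam ≤ R.q v j := by
  linarith [(R.isGreatest_gam hP hv hj).2 ⟨v, hv, j, hj, rfl⟩]

/-- Otherwise the edge lies in the facet, and so do both of its endpoints. -/
lemma inner_ne_inner_of_isEdgeOf {S : Set (E d)} (hS : IsEdgeOf R.P S) {j : Fin m}
    (hone : (vertices R.P ∩ S ∩ faceOf R.P (R.u j)).ncard = 1) {a b : E d} (ha : a ∈ S)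
    (hb : b ∈ S) (hab : a ≠ b) : ⟪R.u j, a⟫ ≠ ⟪R.u j, b⟫ := by
  intro heq
  obtain ⟨w, hw⟩ := Set.ncard_eq_one.1 hone
  have hw' : w ∈ vertices R.P ∩ S ∩ faceOf R.P (R.u j) := hw.symm ▸ Set.mem_singleton w
  have hℓ : ⟪a - b, a⟫ ≠ ⟪a - b, b⟫ := by
    rw [← sub_ne_zero, ← inner_sub_right, real_inner_self_eq_norm_sq]
    exact pow_ne_zero 2 (norm_ne_zero_iff.2 (sub_ne_zero.2 hab))
  obtain ⟨p, ⟨hpV, hpS⟩, p', ⟨hp'V, hp'S⟩, hpmin, hp'max⟩ :=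
    exists_extremePoints_isMinOn_isMaxOn R.compact hS.1 ⟨a, ha⟩ (innerSL ℝ (a - b))
      (injOn_of_finrank_vectorSpan_eq_one hS.2 (innerₛₗ ℝ (a - b)) ha hb hℓ)
  have hpp' : p ≠ p' := by
    rintro rfl
    exact hℓ (le_antisymm ((hp'max ha).trans (hpmin hb)) ((hp'max hb).trans (hpmin ha)))
  have hfacet : ∀ x ∈ S, x ∈ vertices R.P → x = w := fun x hx hxV => by
    obtain ⟨c, hc⟩ := exists_sub_eq_smul_of_finrank_vectorSpan_eq_one hS.2 ha hb hab hx hw'.1.2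
    have hxF : ⟪R.u j, x⟫ = supp R.P (R.u j) := by
      rw [← hw'.2.2, ← sub_eq_zero, ← inner_sub_right, hc, real_inner_smul_right, inner_sub_right,
        heq, sub_self, mul_zero]
    exact (hw ▸ ⟨⟨hxV, hx⟩, hS.1.subset hx, hxF⟩ : x ∈ ({w} : Set (E d)))
  exact hpp' ((hfacet p hpS hpV).trans (hfacet p' hp'S hp'V).symm)

lemma exists_vertex_q_le_of_isEdgeOf (hP : 0 < diam R.P) {S : Set (E d)} (hS : IsEdgeOf R.P S)
    {j : Fin m} (hone : (vertices R.P ∩ S ∩ faceOf R.P (R.u j)).ncard = 1) {a b : E d}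
    (ha : a ∈ S) (hb : b ∈ S) (hab : a ≠ b) :
    ∃ p ∈ vertices R.P, R.q p j ≠ 0 ∧ R.q p j ≤ |⟪R.u j, a - b⟫| / ‖a - b‖ := by
  obtain ⟨w, hw⟩ := Set.ncard_eq_one.1 hone
  have hw' : w ∈ vertices R.P ∩ S ∩ faceOf R.P (R.u j) := hw.symm ▸ Set.mem_singleton w
  have hne := R.inner_ne_inner_of_isEdgeOf hS hone ha hb hab
  obtain ⟨p, ⟨hpV, hpS⟩, p', ⟨-, hp'S⟩, hpmin, hp'max⟩ :=
    exists_extremePoints_isMinOn_isMaxOn R.compact hS.1 ⟨a, ha⟩ (innerSL ℝ (R.u j))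
      (injOn_of_finrank_vectorSpan_eq_one hS.2 (innerₛₗ ℝ (R.u j)) ha hb hne)
  have hp'F : ⟪R.u j, p'⟫ = supp R.P (R.u j) :=
    le_antisymm (R.inner_le_supp (hS.1.subset hp'S) _) (hw'.2.2 ▸ hp'max hw'.1.2)
  have hpos : 0 < ⟪R.u j, p' - p⟫ := by
    have h₁ : ⟪R.u j, p⟫ ≤ ⟪R.u j, a⟫ := hpmin ha
    have h₂ : ⟪R.u j, p⟫ ≤ ⟪R.u j, b⟫ := hpmin hb
    have h₃ : ⟪R.u j, a⟫ ≤ ⟪R.u j, p'⟫ := hp'max ha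
    have h₄ : ⟪R.u j, b⟫ ≤ ⟪R.u j, p'⟫ := hp'max hb
    rw [inner_sub_right, sub_pos]
    rcases hne.lt_or_gt with h | h <;> linarith
  have hp'p : p' - p ≠ 0 := fun h => by simp [h] at hpos
  have hq_eq : R.q p j = ⟪R.u j, p' - p⟫ / diam R.P := by
    rw [FacetRep.q, qf, ← hp'F, inner_sub_right]
  obtain ⟨c, hc⟩ := exists_sub_eq_smul_of_finrank_vectorSpan_eq_one hS.2 ha hb hab hp'S hpS
  have hc0 : c ≠ 0 := by rintro rfl; exact hp'p (by rw [hc, zero_smul])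
  refine ⟨p, hpV, hq_eq ▸ (div_pos hpos hP).ne', ?_⟩
  calc R.q p j = ⟪R.u j, p' - p⟫ / diam R.P := hq_eq
    _ ≤ ⟪R.u j, p' - p⟫ / ‖p' - p‖ := by
        refine div_le_div_of_nonneg_left hpos.le (norm_pos_iff.2 hp'p) ?_
        rw [← dist_eq_norm]
        exact dist_le_diam_of_mem R.compact.isBounded (hS.1.subset hp'S) (hS.1.subset hpS)
    _ = |⟪R.u j, a - b⟫| / ‖a - b‖ := by
        rw [← abs_of_pos hpos, hc, abs_inner_smul_div_norm_smul _ _ hc0]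

end FacetRep

theorem statement10 (d m : ℕ) (hd : 2 ≤ d) (R : FacetRep d m) (hs : R.Simple)
    (V : Finset (E d)) (hV : (↑V : Set (E d)) = vertices R.P)
    (φ : ℝ)
    (hφ : IsLeast {θ : ℝ | ∃ j : Fin m, ∃ S : Set (E d), IsEdgeOf R.P S ∧
        (vertices R.P ∩ S ∩ faceOf R.P (R.u j)).ncard = 1 ∧
        ∃ a ∈ S, ∃ b ∈ S, a ≠ b ∧
          θ = Real.arcsin (|⟪R.u j, a - b⟫| / ‖a - b‖)} φ) :
    alpha R V ≤ Real.sqrt d / Real.sin φ ∧ alpha R V ≤ Real.sqrt d / (1 - R.gam) := by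
  have hP : 0 < diam R.P := R.diam_pos (by omega)
  obtain ⟨j, S, hS, hone, a, ha, c, hc, hac, hφeq⟩ := hφ.1
  have hφ_mem : φ ∈ Icc (-(Real.pi / 2)) (Real.pi / 2) := hφeq ▸ Real.arcsin_mem_Icc _
  have hslope : ∀ i T, IsEdgeOf R.P T → (vertices R.P ∩ T ∩ faceOf R.P (R.u i)).ncard = 1 →
      ∀ x ∈ T, ∀ y ∈ T, x ≠ y → Real.sin φ ≤ |⟪R.u i, x - y⟫| / ‖x - y‖ :=
    fun i T hT hone' x hx y hy hxy =>
      (Real.le_arcsin_iff_sin_le hφ_mem (abs_inner_div_norm_mem_Icc (R.facet i).1 _)).1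
        (hφ.2 ⟨i, T, hT, hone', x, hx, y, hy, hxy, rfl⟩)
  obtain ⟨p, hp, hpj, hle⟩ := R.exists_vertex_q_le_of_isEdgeOf hP hS hone ha hc hac
  have hγ : 0 < 1 - R.gam := R.one_sub_gam_pos hP hp hpj
  have hγφ : 1 - R.gam ≤ Real.sin φ := by
    rw [hφeq, Real.sin_arcsin' (abs_inner_div_norm_mem_Icc (R.facet j).1 _)]
    exact (R.one_sub_gam_le_q hP hp hpj).trans hle
  have hα : alpha R V ≤ √(d : ℝ) / Real.sin φ := by
    refine Real.sSup_le ?_ (div_nonneg (Real.sqrt_nonneg _) (hγ.trans_le hγφ).le)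
    rintro _ ⟨v, hv, rfl⟩
    have hv : v ∈ vertices R.P := hV ▸ hv
    exact R.invNormU_act_le_of_forall_le hP hv (hs v hv) (hγ.trans_le hγφ) hslope
  exact ⟨hα, hα.trans (div_le_div_of_nonneg_left (Real.sqrt_nonneg _) hγ hγφ)⟩

end AverkovHenk
end
end

section
/- Let P be a simple d-polytope in E^d with m facets, let ε_1 > 0 be such that δ := (1 − γ)/(1 + d) − ε_1·√d·α > 0 and ε_1 < (1 − γ)/(√d·α). Then for every vertex v of P, every x ∈ P^v_{ε_1,δ}, and every 1 ≤ i ≤ m − d, one has σ_i(q(x)) ≥ C(m−d, i)·δ^i − (C(m, i) − C(m−d, i))·2^{i−1}·ε_1, where C(a,b) denotes the binomial coefficient. -/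
noncomputable section

open Metric Set Finset Matrix
open scoped RealInnerProductSpace BigOperators Classical

namespace AverkovHenk

section Helpers
variable {d m : ℕ}

lemma mem_P_iff (R : FacetRep d m) (x : E d) : x ∈ R.P ↔ ∀ j, 0 ≤ R.q x j := by
  conv_lhs => rw [R.rep]
  exact Iff.rfl

lemma q_add (R : FacetRep d m) (j : Fin m) (y w : E d) :
    R.q (y + w) j = R.q y j - ⟪R.u j, w⟫ / Metric.diam R.P := by
  simp only [FacetRep.q, qf, inner_add_right]
  ring

lemma exists_supp (R : FacetRep d m) (u : E d) : ∃ p ∈ R.P, ⟪u, p⟫ = supp R.P u := by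
  have hne : R.P.Nonempty := R.fulldim.mono interior_subset
  have hc : ContinuousOn (fun x : E d => ⟪u, x⟫) R.P :=
    (Continuous.inner continuous_const continuous_id).continuousOn
  obtain ⟨p, hp, hmax⟩ := R.compact.exists_isMaxOn hne hc
  refine ⟨p, hp, le_antisymm ?_ ?_⟩
  · exact le_csSup ⟨⟪u, p⟫, by rintro y ⟨t, ht, rfl⟩; exact isMaxOn_iff.mp hmax t ht⟩ ⟨p, hp, rfl⟩
  · exact csSup_le (hne.image _) (by rintro y ⟨t, ht, rfl⟩; exact isMaxOn_iff.mp hmax t ht)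

lemma diam_pos (R : FacetRep d m) (hd : 2 ≤ d) : 0 < Metric.diam R.P := by
  obtain ⟨c, hc⟩ := R.fulldim
  obtain ⟨r, hr, hball⟩ := Metric.isOpen_iff.mp isOpen_interior c hc
  set w := c + (r/2) • EuclideanSpace.single (⟨0, by omega⟩ : Fin d) (1:ℝ) with hw
  have hdist : dist w c = r/2 := by
    rw [dist_eq_norm, hw, add_sub_cancel_left, norm_smul, EuclideanSpace.norm_single]
    rw [norm_one, mul_one, Real.norm_eq_abs, abs_of_pos (by linarith : (0:ℝ) < r/2)]
  have hwP : w ∈ R.P := interior_subset (hball (by rw [Metric.mem_ball, hdist]; linarith))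
  have hcP : c ∈ R.P := interior_subset hc
  have := Metric.dist_le_diam_of_mem R.compact.isBounded hwP hcP
  linarith [hdist ▸ this]

lemma q_le_one (R : FacetRep d m) (hd : 2 ≤ d) (j : Fin m) {y : E d} (hy : y ∈ R.P) :
    R.q y j ≤ 1 := by
  obtain ⟨p, hp, hpe⟩ := exists_supp R (R.u j)
  have hD := diam_pos R hd
  have h1 : supp R.P (R.u j) - ⟪R.u j, y⟫ ≤ Metric.diam R.P := by
    rw [← hpe, ← inner_sub_right]
    calc ⟪R.u j, p - y⟫ ≤ ‖R.u j‖ * ‖p - y‖ := real_inner_le_norm _ _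
    _ = dist p y := by rw [(R.facet j).1, one_mul, dist_eq_norm]
    _ ≤ _ := Metric.dist_le_diam_of_mem R.compact.isBounded hp hy
  exact div_le_one_of_le₀ h1 hD.le

lemma prod_bound {ι : Type*} (ε : ℝ) (hε0 : 0 ≤ ε) (hε2 : ε ≤ 2) (b : ι → ℝ)
    (J : Finset ι) (hb : ∀ j ∈ J, -ε ≤ b j ∧ b j ≤ 2) :
    -(ε * 2 ^ (J.card - 1)) ≤ ∏ j ∈ J, b j ∧ ∏ j ∈ J, b j ≤ 2 ^ J.card := by
  classical
  induction J using Finset.induction_on with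
  | empty =>
    simp only [Finset.prod_empty, Finset.card_empty, Nat.zero_sub, pow_zero, mul_one]
    exact ⟨by nlinarith, le_refl 1⟩
  | @insert a J ha ih =>
    have hbJ : ∀ j ∈ J, -ε ≤ b j ∧ b j ≤ 2 := fun j hj => hb j (Finset.mem_insert_of_mem hj)
    obtain ⟨hl, hu⟩ := ih hbJ
    obtain ⟨hba, hba2⟩ := hb a (Finset.mem_insert_self a J)
    rw [Finset.prod_insert ha, Finset.card_insert_of_notMem ha]
    simp only [Nat.add_sub_cancel]
    have h2p : (0:ℝ) < 2 ^ J.card := by positivity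
    rcases le_or_gt 0 (∏ j ∈ J, b j) with hp | hp
    · constructor
      · nlinarith [mul_nonneg (by linarith : (0:ℝ) ≤ b a + ε) hp,
          mul_nonneg hε0 (by linarith : (0:ℝ) ≤ 2 ^ J.card - ∏ j ∈ J, b j)]
      · rw [pow_succ]
        nlinarith [mul_nonneg (by linarith : (0:ℝ) ≤ 2 - b a) hp]
    · have hJne : J.card ≠ 0 := by
        intro h
        rw [Finset.card_eq_zero.mp h] at hp
        norm_num at hp
      have hkc : J.card = (J.card - 1) + 1 := by omega
      have h2k : (0:ℝ) < 2 ^ (J.card - 1) := by positivity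
      have hpow : (2:ℝ) ^ J.card = 2 ^ (J.card - 1) * 2 := by
        conv_lhs => rw [hkc]
        rw [pow_succ]
      constructor
      · have h1 : (2 - b a) * ∏ j ∈ J, b j ≤ 0 :=
          mul_nonpos_of_nonneg_of_nonpos (by linarith) hp.le
        rw [hpow]
        nlinarith [hl]
      · have h1 : (b a + ε) * ∏ j ∈ J, b j ≤ 0 :=
          mul_nonpos_of_nonneg_of_nonpos (by linarith) hp.le
        have h2 : -(∏ j ∈ J, b j) ≤ ε * 2 ^ (J.card - 1) := by linarith
        have h3 : ε * -(∏ j ∈ J, b j) ≤ ε * (ε * 2 ^ (J.card - 1)) :=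
          mul_le_mul_of_nonneg_left h2 hε0
        have h4 : ε * ε ≤ 4 := by nlinarith
        have h5 : ε * (ε * 2 ^ (J.card - 1)) ≤ 4 * 2 ^ (J.card - 1) := by nlinarith
        rw [pow_succ, hpow]
        nlinarith [h1, h3, h5]


end Helpers

set_option maxHeartbeats 1000000

theorem statement14 (d m : ℕ) (hd : 2 ≤ d) (R : FacetRep d m) (hs : R.Simple)
    (V : Finset (E d)) (hV : (↑V : Set (E d)) = vertices R.P)
    (ε₁ δ : ℝ) (h0 : 0 < ε₁)
    (hδdef : δ = (1 - R.gam) / (1 + d) - ε₁ * Real.sqrt d * alpha R V)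
    (hδ : 0 < δ) (hε : ε₁ < (1 - R.gam) / (Real.sqrt d * alpha R V)) :
    ∀ v ∈ vertices R.P, ∀ x ∈ R.Pv v ε₁ δ, ∀ i, 1 ≤ i → i ≤ m - d →
      (Nat.choose (m - d) i : ℝ) * δ ^ i -
          ((Nat.choose m i : ℝ) - (Nat.choose (m - d) i : ℝ)) * 2 ^ (i - 1) * ε₁
        ≤ esymm (R.q x) i := by
  intro v hv x hx i hi1 hi2
  classical
  have hvP : v ∈ R.P := extremePoints_subset hv
  have hD : 0 < Metric.diam R.P := diam_pos R hd
  have hact : ∀ j, j ∈ R.act v ↔ R.q v j = 0 := by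
    intro j; simp [FacetRep.act]
  have hcard : (R.act v).card = d := hs v hv
  have hdm : d < m := by omega
  have hcardc : (R.act v)ᶜ.card = m - d := by
    rw [Finset.card_compl, hcard, Fintype.card_fin]
  -- basic q facts
  have hq0 : ∀ j, ∀ y ∈ R.P, 0 ≤ R.q y j := fun j y hy => (mem_P_iff R y).mp hy j
  -- γ facts
  have hgbdd : ∀ c ∈ {c | ∃ v' ∈ vertices R.P, ∃ j, R.q v' j ≠ 0 ∧ c = 1 - R.q v' j}, c ≤ 1 := by
    rintro c ⟨v', hv', j, hj, rfl⟩
    have := hq0 j v' (extremePoints_subset hv')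
    linarith
  have hgle : ∀ j ∉ R.act v, 1 - R.q v j ≤ R.gam := by
    intro j hj
    exact le_csSup ⟨1, hgbdd⟩ ⟨v, hv, j, fun h => hj ((hact j).mpr h), rfl⟩
  obtain ⟨j₀, hj₀⟩ : ∃ j, j ∉ R.act v := by
    have : (R.act v)ᶜ.Nonempty := Finset.card_pos.mp (by rw [hcardc]; omega)
    obtain ⟨j, hj⟩ := this
    exact ⟨j, Finset.mem_compl.mp hj⟩
  have hγ0 : 0 ≤ R.gam :=
    le_trans (by have := q_le_one R hd j₀ hvP; linarith) (hgle j₀ hj₀)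
  have hqv1 : ∀ j ∉ R.act v, 1 - R.gam ≤ R.q v j := by
    intro j hj; have := hgle j hj; linarith
  -- α facts
  have hvV : v ∈ V := by rw [← Finset.mem_coe, hV]; exact hv
  have hαbdd : BddAbove {a | ∃ v' ∈ V, a = invNormU R.u (R.act v')} := by
    have he : {a | ∃ v' ∈ V, a = invNormU R.u (R.act v')} =
        (fun v' => invNormU R.u (R.act v')) '' ↑V := by
      ext a; simp [eq_comm]
    rw [he]
    exact (V.finite_toSet.image _).bddAbove
  have havα : invNormU R.u (R.act v) ≤ alpha R V := le_csSup hαbdd ⟨v, hvV, rfl⟩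
  have hα0 : 0 ≤ alpha R V := by
    apply Real.sSup_nonneg
    rintro a ⟨v', _, rfl⟩
    apply Real.sSup_nonneg
    rintro c ⟨x', _, rfl⟩
    exact norm_nonneg _
  have hsd0 : 0 ≤ Real.sqrt d := Real.sqrt_nonneg _
  have h1γ : 0 < 1 - R.gam := by
    have h1 : 0 ≤ ε₁ * Real.sqrt d * alpha R V := by positivity
    have h2 : 0 < (1 - R.gam) / (1 + d) := by rw [hδdef] at hδ; linarith
    have hd0 : (0:ℝ) < 1 + d := by positivity
    rcases div_pos_iff.mp h2 with ⟨h, _⟩ | ⟨_, h⟩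
    · exact h
    · linarith
  -- the quadratic form g
  set g : E d → ℝ := fun y => ∑ j ∈ R.act v, ⟪R.u j, y⟫^2 with hgdef
  have hgnn : ∀ y, 0 ≤ g y := fun y => Finset.sum_nonneg fun j _ => sq_nonneg _
  have hgsmul : ∀ (cc : ℝ) (y : E d), g (cc • y) = cc^2 * g y := by
    intro cc y
    simp only [hgdef, inner_smul_right, mul_pow, Finset.mul_sum]
  have hgcont : Continuous g := by
    apply continuous_finset_sum
    intro j _
    exact (Continuous.inner continuous_const continuous_id).pow 2
  haveI hnt : Nontrivial (E d) := by
    refine ⟨EuclideanSpace.single (⟨0, by omega⟩ : Fin d) (1:ℝ), 0, fun h => ?_⟩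
    have := congrArg norm h
    rw [EuclideanSpace.norm_single, norm_one, norm_zero] at this
    norm_num at this
  obtain ⟨w, hwmem, hwmin⟩ := (isCompact_sphere (0:E d) 1).exists_isMinOn
    (NormedSpace.sphere_nonempty.mpr zero_le_one) hgcont.continuousOn
  have hwn : ‖w‖ = 1 := mem_sphere_zero_iff_norm.mp hwmem
  -- the minimum is positive (else contradiction with v extreme)
  have hμpos : 0 < g w := by
    rcases (hgnn w).lt_or_eq with h | h
    · exact h
    · exfalso
      have hall : ∀ j ∈ R.act v, ⟪R.u j, w⟫ = 0 := by
        intro j hj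
        have h2 := (Finset.sum_eq_zero_iff_of_nonneg
          (fun j (_ : j ∈ R.act v) => sq_nonneg (⟪R.u j, w⟫))).mp h.symm j hj
        exact (pow_eq_zero_iff two_ne_zero).mp h2
      set s := (1 - R.gam) * Metric.diam R.P with hsdef
      have hspos : 0 < s := mul_pos h1γ hD
      have hmemP : ∀ t : ℝ, |t| ≤ s → v + t • w ∈ R.P := by
        intro t ht
        rw [mem_P_iff]
        intro j
        rw [q_add, inner_smul_right]
        by_cases hj : j ∈ R.act v
        · rw [hall j hj]
          simp [(hact j).mp hj]
        · have h1 : 1 - R.gam ≤ R.q v j := hqv1 j hj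
          have h2 : |t * ⟪R.u j, w⟫| ≤ s := by
            rw [abs_mul]
            calc |t| * |⟪R.u j, w⟫| ≤ s * 1 := by
                  apply mul_le_mul ht ?_ (abs_nonneg _) hspos.le
                  calc |⟪R.u j, w⟫| ≤ ‖R.u j‖ * ‖w‖ := abs_real_inner_le_norm _ _
                  _ = 1 := by rw [(R.facet j).1, hwn, one_mul]
              _ = s := mul_one s
          have h3 : t * ⟪R.u j, w⟫ ≤ (1 - R.gam) * Metric.diam R.P := by
            rw [← hsdef]; exact (abs_le.mp h2).2
          have h4 : t * ⟪R.u j, w⟫ / Metric.diam R.P ≤ 1 - R.gam := by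
            rw [div_le_iff₀ hD]; linarith
          linarith
      have h1m : v + s • w ∈ R.P := hmemP s (by rw [abs_of_pos hspos])
      have h2m : v + (-s) • w ∈ R.P := hmemP (-s) (by rw [abs_neg, abs_of_pos hspos])
      have hseg : v ∈ openSegment ℝ (v + s • w) (v + (-s) • w) :=
        ⟨1/2, 1/2, by norm_num, by norm_num, by norm_num, by module⟩
      have heq := ((mem_extremePoints.mp hv).2 _ h1m _ h2m hseg).1
      have hzero : s • w = 0 := by
        have := heq
        rwa [add_eq_left] at this
      have : ‖s • w‖ = 0 := by rw [hzero, norm_zero]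
      rw [norm_smul, hwn, mul_one, Real.norm_eq_abs, abs_of_pos hspos] at this
      linarith
  -- g y ≥ μ ‖y‖²
  have hgy : ∀ y : E d, g w * ‖y‖^2 ≤ g y := by
    intro y
    rcases eq_or_ne y 0 with rfl | hy
    · simp [hgdef]
    · have hny : 0 < ‖y‖ := norm_pos_iff.mpr hy
      have hz : (‖y‖⁻¹ • y) ∈ Metric.sphere (0:E d) 1 := by
        rw [mem_sphere_zero_iff_norm, norm_smul, norm_inv, norm_norm,
          inv_mul_cancel₀ hny.ne']
      have hmin := isMinOn_iff.mp hwmin _ hz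
      rw [hgsmul] at hmin
      have hinv : ‖y‖⁻¹^2 = (‖y‖^2)⁻¹ := by rw [inv_pow]
      rw [hinv] at hmin
      have h2 : g w * ‖y‖^2 ≤ (‖y‖^2)⁻¹ * g y * ‖y‖^2 :=
        mul_le_mul_of_nonneg_right hmin (sq_nonneg _)
      calc g w * ‖y‖^2 ≤ (‖y‖^2)⁻¹ * g y * ‖y‖^2 := h2
        _ = g y := by field_simp
  -- S_v is bounded above, av facts
  have havS : invNormU R.u (R.act v) =
      sSup {c | ∃ x' : E d, Real.sqrt (∑ j ∈ R.act v, (⟪R.u j, x'⟫)^2) ≤ 1 ∧ c = ‖x'‖} := rfl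
  have hSvb : BddAbove {c | ∃ x' : E d,
      Real.sqrt (∑ j ∈ R.act v, (⟪R.u j, x'⟫)^2) ≤ 1 ∧ c = ‖x'‖} := by
    refine ⟨Real.sqrt (1 / g w), ?_⟩
    rintro c ⟨x', hx', rfl⟩
    have hgx1 : g x' ≤ 1 := by
      have h1 : Real.sqrt (g x') ≤ 1 := hx'
      nlinarith [Real.sq_sqrt (hgnn x'), Real.sqrt_nonneg (g x')]
    have h2 := hgy x'
    rw [Real.le_sqrt (norm_nonneg _) (by positivity)]
    rw [le_div_iff₀ hμpos]
    nlinarith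
  have hav_mem : ∀ c ∈ {c | ∃ x' : E d,
      Real.sqrt (∑ j ∈ R.act v, (⟪R.u j, x'⟫)^2) ≤ 1 ∧ c = ‖x'‖},
      c ≤ invNormU R.u (R.act v) := by
    intro c hc
    rw [havS]
    exact le_csSup hSvb hc
  have hav0 : 0 ≤ invNormU R.u (R.act v) := by
    apply hav_mem
    exact ⟨0, by simp, by simp⟩
  -- F4 : norm bound
  have hF4 : ∀ y : E d, ‖y‖ ≤ invNormU R.u (R.act v) * Real.sqrt (g y) := by
    intro y
    rcases (hgnn y).eq_or_lt with h | h
    · have hy0 : y = 0 := by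
        have h2 := hgy y
        rw [← h] at h2
        have h2' : g w * ‖y‖^2 ≤ g w * 0 := by rw [mul_zero]; exact h2
        have h3 : ‖y‖^2 ≤ 0 := le_of_mul_le_mul_left h2' hμpos
        exact norm_eq_zero.mp ((pow_eq_zero_iff two_ne_zero).mp (le_antisymm h3 (sq_nonneg _)))
      rw [hy0, norm_zero]
      positivity
    · have hs : 0 < Real.sqrt (g y) := Real.sqrt_pos.mpr h
      have hg1 : g ((Real.sqrt (g y))⁻¹ • y) = 1 := by
        rw [hgsmul, inv_pow, Real.sq_sqrt h.le, inv_mul_cancel₀ h.ne']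
      have hmem : ‖(Real.sqrt (g y))⁻¹ • y‖ ≤ invNormU R.u (R.act v) := by
        apply hav_mem
        refine ⟨(Real.sqrt (g y))⁻¹ • y, ?_, rfl⟩
        have : (∑ j ∈ R.act v, (⟪R.u j, (Real.sqrt (g y))⁻¹ • y⟫)^2) = 1 := hg1
        rw [this, Real.sqrt_one]
      rw [norm_smul, norm_inv, Real.norm_eq_abs, abs_of_pos hs] at hmem
      calc ‖y‖ = Real.sqrt (g y) * ((Real.sqrt (g y))⁻¹ * ‖y‖) := by field_simp
        _ ≤ Real.sqrt (g y) * invNormU R.u (R.act v) :=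
            mul_le_mul_of_nonneg_left hmem hs.le
        _ = invNormU R.u (R.act v) * Real.sqrt (g y) := mul_comm _ _
  -- the linear map L and the vector z
  have hcardfin : Fintype.card {j // j ∈ R.act v} = d := by
    rw [Fintype.card_coe, hcard]
  set L : E d →ₗ[ℝ] ({j // j ∈ R.act v} → ℝ) :=
    { toFun := fun y => fun jj => ⟪R.u jj.1, y⟫
      map_add' := fun a b => by funext jj; exact inner_add_right _ _ _
      map_smul' := fun cc a => by funext jj; simp [inner_smul_right] } with hLdef
  have hLzero : ∀ y, L y = 0 → y = 0 := by
    intro y hy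
    have hgy0 : g y = 0 := Finset.sum_eq_zero (fun j hj => by
      have h1 : ⟪R.u j, y⟫ = 0 := congrFun hy ⟨j, hj⟩
      rw [h1]; ring)
    have h2 := hF4 y
    rw [hgy0, Real.sqrt_zero, mul_zero] at h2
    exact norm_eq_zero.mp (le_antisymm h2 (norm_nonneg _))
  have hLinj : Function.Injective L := by
    intro a b hab
    have := hLzero (a - b) (by rw [map_sub, hab, sub_self])
    exact sub_eq_zero.mp this
  have hLsurj : Function.Surjective L := by
    rw [← LinearMap.injective_iff_surjective_of_finrank_eq_finrank (by
      rw [finrank_euclideanSpace_fin, Module.finrank_pi, hcardfin])]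
    exact hLinj
  obtain ⟨z, hz⟩ := hLsurj (fun _ => (-1 : ℝ))
  have hzval : ∀ j (hj : j ∈ R.act v), ⟪R.u j, z⟫ = -1 := fun j hj => congrFun hz ⟨j, hj⟩
  have hgz : g z = d := by
    have h1 : g z = ∑ j ∈ R.act v, ((-1:ℝ))^2 :=
      Finset.sum_congr rfl (fun j hj => by rw [hzval j hj])
    rw [h1, Finset.sum_const, hcard]
    simp
  have hz_le : ‖z‖ ≤ invNormU R.u (R.act v) * Real.sqrt d := by
    have := hF4 z
    rwa [hgz] at this
  have hz_ge : 1 ≤ ‖z‖ := by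
    obtain ⟨j1, hj1⟩ : (R.act v).Nonempty := Finset.card_pos.mp (by omega)
    have h1 : |⟪R.u j1, z⟫| ≤ ‖R.u j1‖ * ‖z‖ := abs_real_inner_le_norm _ _
    rw [hzval j1 hj1, (R.facet j1).1, one_mul] at h1
    simpa using h1
  set A := Real.sqrt d * alpha R V with hA
  have hA_ge : invNormU R.u (R.act v) * Real.sqrt d ≤ A := by
    rw [hA, mul_comm]
    exact mul_le_mul_of_nonneg_left havα hsd0
  have hzA : ‖z‖ ≤ A := le_trans hz_le hA_ge
  have hA1 : 1 ≤ A := le_trans hz_ge hzA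
  have hA0 : 0 < A := lt_of_lt_of_le one_pos hA1
  -- δ estimate in terms of A
  have hδ' : ε₁ * A < (1 - R.gam) / (1 + d) := by
    rw [hδdef] at hδ
    rw [hA, ← mul_assoc]
    linarith
  -- the center c
  set t := (1 - R.gam) * Metric.diam R.P / (2 * A) with htdef
  have htpos : 0 < t := by
    rw [htdef]; positivity
  set β := (1 - R.gam) / (2 * A) with hβdef
  have hβpos : 0 < β := by rw [hβdef]; positivity
  have htD : t / Metric.diam R.P = β := by
    rw [htdef, hβdef]
    field_simp
  have hcq : ∀ j, β ≤ R.q (v + t • z) j := by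
    intro j
    rw [q_add, inner_smul_right]
    by_cases hj : j ∈ R.act v
    · rw [hzval j hj, (hact j).mp hj]
      have : 0 - t * (-1) / Metric.diam R.P = t / Metric.diam R.P := by ring
      rw [this, htD]
    · have h1 : 1 - R.gam ≤ R.q v j := hqv1 j hj
      have h2 : ⟪R.u j, z⟫ ≤ A := by
        calc ⟪R.u j, z⟫ ≤ |⟪R.u j, z⟫| := le_abs_self _
          _ ≤ ‖R.u j‖ * ‖z‖ := abs_real_inner_le_norm _ _
          _ = ‖z‖ := by rw [(R.facet j).1, one_mul]
          _ ≤ A := hzA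
      have h3 : t * ⟪R.u j, z⟫ / Metric.diam R.P ≤ β * A := by
        have hle : t * ⟪R.u j, z⟫ ≤ t * A := mul_le_mul_of_nonneg_left h2 htpos.le
        have heq2 : t * A / Metric.diam R.P = β * A := by
          rw [hβdef, htdef]; field_simp
        rw [← heq2, div_eq_mul_inv, div_eq_mul_inv]
        exact mul_le_mul_of_nonneg_right hle (inv_nonneg.mpr hD.le)
      have h4 : β * A = (1 - R.gam) / 2 := by
        rw [hβdef]; field_simp
      have h5 : β ≤ (1 - R.gam) / 2 := by
        rw [hβdef]
        rw [div_le_div_iff₀ (by positivity) (by norm_num)]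
        nlinarith
      rw [h4] at h3
      linarith
  have hcP : v + t • z ∈ R.P := (mem_P_iff R _).mpr (fun j => le_trans hβpos.le (hcq j))
  -- bounds on q x
  obtain ⟨hx1, hx2⟩ := hx
  have hxl : ∀ j, -ε₁ ≤ R.q x j := by
    intro j
    by_cases hj : j ∈ R.act v
    · exact hx1 j hj
    · have := hx2 j hj
      linarith
  have hεβ : ε₁ ≤ β := by
    have hd3 : (3:ℝ) ≤ 1 + d := by
      have : (2:ℝ) ≤ d := by exact_mod_cast hd
      linarith
    have h2 : (1 - R.gam) / (1 + d) ≤ (1 - R.gam) / 3 :=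
      div_le_div_of_nonneg_left h1γ.le (by norm_num) hd3
    rw [hβdef, le_div_iff₀ (by positivity)]
    nlinarith
  have hε2 : ε₁ ≤ 2 := by
    have hβle : β ≤ 2 := by
      rw [hβdef, div_le_iff₀ (by positivity)]
      nlinarith
    linarith
  set lam := 1 + ε₁ / β with hlamdef
  have hlam1 : 1 < lam := by
    rw [hlamdef]
    have : 0 < ε₁ / β := div_pos h0 hβpos
    linarith
  have hlam2 : lam ≤ 2 := by
    rw [hlamdef]
    have : ε₁ / β ≤ 1 := (div_le_one hβpos).mpr hεβ
    linarith
  have hxu : ∀ j, R.q x j ≤ lam := by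
    intro j
    have hlam0 : lam ≠ 0 := by positivity
    have hinv : 0 < lam⁻¹ := by positivity
    have hinv1 : lam⁻¹ < 1 := by
      rw [inv_lt_one_iff₀]
      right; exact hlam1
    have hxval : ∀ j', R.q (v + t • z + lam⁻¹ • (x - (v + t • z))) j' =
        R.q (v + t • z) j' - lam⁻¹ * (R.q (v + t • z) j' - R.q x j') := by
      intro j'
      rw [q_add, inner_smul_right, inner_sub_right]
      have hqc : R.q (v + t • z) j' - R.q x j' =
          (⟪R.u j', x⟫ - ⟪R.u j', v + t • z⟫) / Metric.diam R.P := by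
        simp only [FacetRep.q, qf]
        ring
      rw [hqc]
      ring
    have hx'P : v + t • z + lam⁻¹ • (x - (v + t • z)) ∈ R.P := by
      rw [mem_P_iff]
      intro j'
      rw [hxval j']
      have h1 := hcq j'
      have h2 := hxl j'
      have hkey : (1 - lam⁻¹) * β = lam⁻¹ * ε₁ := by
        rw [hlamdef]
        field_simp
        ring
      nlinarith [mul_nonneg (by linarith : (0:ℝ) ≤ 1 - lam⁻¹)
          (by linarith : 0 ≤ R.q (v + t • z) j' - β),
        mul_nonneg hinv.le (by linarith : 0 ≤ R.q x j' + ε₁), hkey]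
    have h1 : R.q (v + t • z + lam⁻¹ • (x - (v + t • z))) j ≤ 1 := q_le_one R hd j hx'P
    have h2 := hxval j
    have h3 := hcq j
    have h4 : R.q x j = lam * R.q (v + t • z + lam⁻¹ • (x - (v + t • z))) j +
        (1 - lam) * R.q (v + t • z) j := by
      rw [h2]
      field_simp
      ring
    rw [h4]
    have h5 : (1 - lam) * R.q (v + t • z) j ≤ 0 :=
      mul_nonpos_of_nonpos_of_nonneg (by linarith) (by linarith)
    have h6 : lam * R.q (v + t • z + lam⁻¹ • (x - (v + t • z))) j ≤ lam * 1 :=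
      mul_le_mul_of_nonneg_left h1 (by linarith : (0:ℝ) ≤ lam)
    calc lam * R.q (v + t • z + lam⁻¹ • (x - (v + t • z))) j + (1 - lam) * R.q (v + t • z) j
        ≤ lam * 1 + 0 := add_le_add h6 h5
      _ = lam := by rw [mul_one, add_zero]
  have hxu2 : ∀ j, R.q x j ≤ 2 := fun j => le_trans (hxu j) hlam2
  -- final combinatorial estimate
  set T := Finset.powersetCard i ((R.act v)ᶜ) with hTdef
  have hTsub : T ⊆ Finset.powersetCard i (Finset.univ : Finset (Fin m)) := by
    intro J hJ
    rw [Finset.mem_powersetCard] at hJ ⊢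
    exact ⟨Finset.subset_univ J, hJ.2⟩
  have hTcard : T.card = (m - d).choose i := by
    rw [hTdef, Finset.card_powersetCard, hcardc]
  have hUcard : (Finset.powersetCard i (Finset.univ : Finset (Fin m))).card = m.choose i := by
    rw [Finset.card_powersetCard, Finset.card_univ, Fintype.card_fin]
  have hsplit : esymm (R.q x) i = (∑ J ∈ T, ∏ j ∈ J, R.q x j) +
      ∑ J ∈ Finset.powersetCard i (Finset.univ : Finset (Fin m)) \ T, ∏ j ∈ J, R.q x j := by
    rw [esymm, ← Finset.sum_sdiff hTsub]
    ring
  have hT1 : ∀ J ∈ T, δ^i ≤ ∏ j ∈ J, R.q x j := by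
    intro J hJ
    rw [hTdef, Finset.mem_powersetCard] at hJ
    have hprod : ∏ _j ∈ J, δ ≤ ∏ j ∈ J, R.q x j :=
      Finset.prod_le_prod (fun _ _ => hδ.le)
        (fun j hj => hx2 j (Finset.mem_compl.mp (hJ.1 hj)))
    rw [Finset.prod_const, hJ.2] at hprod
    exact hprod
  have hT2 : ∀ J ∈ Finset.powersetCard i (Finset.univ : Finset (Fin m)) \ T,
      -(ε₁ * 2^(i-1)) ≤ ∏ j ∈ J, R.q x j := by
    intro J hJ
    have hJc : J.card = i := (Finset.mem_powersetCard.mp (Finset.mem_sdiff.mp hJ).1).2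
    have := (prod_bound ε₁ h0.le hε2 (R.q x) J (fun j _ => ⟨hxl j, hxu2 j⟩)).1
    rwa [hJc] at this
  have hS1 : (T.card : ℝ) * δ^i ≤ ∑ J ∈ T, ∏ j ∈ J, R.q x j := by
    have := Finset.card_nsmul_le_sum T (fun J => ∏ j ∈ J, R.q x j) (δ^i) hT1
    simpa [nsmul_eq_mul] using this
  have hS2 : (((Finset.powersetCard i (Finset.univ : Finset (Fin m)) \ T).card : ℝ)) *
      (-(ε₁ * 2^(i-1))) ≤
      ∑ J ∈ Finset.powersetCard i (Finset.univ : Finset (Fin m)) \ T, ∏ j ∈ J, R.q x j := by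
    have := Finset.card_nsmul_le_sum _ (fun J => ∏ j ∈ J, R.q x j) (-(ε₁ * 2^(i-1))) hT2
    simpa [nsmul_eq_mul] using this
  have hsdcard : (Finset.powersetCard i (Finset.univ : Finset (Fin m)) \ T).card =
      m.choose i - (m - d).choose i := by
    rw [Finset.card_sdiff_of_subset hTsub, hUcard, hTcard]
  have hchle : (m - d).choose i ≤ m.choose i := Nat.choose_le_choose i (Nat.sub_le m d)
  rw [hsplit]
  rw [hTcard] at hS1
  rw [hsdcard, Nat.cast_sub hchle] at hS2
  linarith [hS1, hS2]


end AverkovHenk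
end
end
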